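/- Let V be a full-dimensional closed convex polyhedral cone in ℝ^n with vertex 0 and let P be a linear subspace of dimension j such that the orthogonal projection π_P maps V onto a convex polyhedral cone π_P(V) ⊂ P, generically. For a k-face F of V with k < j, the image π_P(F) is a k-face of π_P(V) if and only if P ∩ C(F,V) ≠ {0}, and in that case the normal cone of π_P(V) at π_P(F) (computed inside P) equals P ∩ C(F,V). -/

import Mathlib

open MeasureTheory Metric Set

/-- `ballVol i` is `α_i`, the volume of the unit ball in `ℝ^i` (`α_0 = 1`). -/
noncomputable def ballVol (i : ℕ) : ℝ :=
  (volume (Metric.closedBall (0 : EuclideanSpace ℝ (Fin i)) 1)).toReal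

/-- `dens d S` is the `d`-dimensional density at the origin of a cone `S` with vertex `0`,
namely `H^d(S ∩ B(0,1)) / α_d` (with the convention `Θ_0({0}) = 1`, automatic here). -/
noncomputable def dens {n : ℕ} (d : ℕ) (S : Set (EuclideanSpace ℝ (Fin n))) : ℝ :=
  (μH[(d : ℝ)] (S ∩ Metric.closedBall 0 1)).toReal / ballVol d

/-- The closed convex polyhedral cone with vertex `0` determined by the outward
normals `u i`. -/
def coneOf {n m : ℕ} (u : Fin m → EuclideanSpace ℝ (Fin n)) :
    Set (EuclideanSpace ℝ (Fin n)) :=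
  {x | ∀ i, inner ℝ (u i) x ≤ (0 : ℝ)}

/-- The face of the polyhedral cone `coneOf u` cut out by the bounding hyperplanes
indexed by `s`. -/
def faceOf {n m : ℕ} (u : Fin m → EuclideanSpace ℝ (Fin n)) (s : Finset (Fin m)) :
    Set (EuclideanSpace ℝ (Fin n)) :=
  {x | (∀ i, inner ℝ (u i) x ≤ (0 : ℝ)) ∧ ∀ i ∈ s, inner ℝ (u i) x = (0 : ℝ)}

/-- The normal (conormal) cone `C(F,V)` of the cone `V` along its face `F`:
vectors nonpositive on `V` and vanishing on `F`. -/
def normalCone {n : ℕ} (V F : Set (EuclideanSpace ℝ (Fin n))) :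
    Set (EuclideanSpace ℝ (Fin n)) :=
  {w | (∀ x ∈ V, inner ℝ w x ≤ (0 : ℝ)) ∧ ∀ x ∈ F, inner ℝ w x = (0 : ℝ)}

/-- The (linear) dimension of a cone: the rank of its linear span. -/
noncomputable def sdim {n : ℕ} (S : Set (EuclideanSpace ℝ (Fin n))) : ℕ :=
  Module.finrank ℝ (Submodule.span ℝ S)

/-!
For `w ∈ P` we have `⟪w, π x⟫ = ⟪w, x⟫`, so inside `P` the normal cone of `π V` along `π F` is
`P ∩ C(F, V)`. An exposing functional of `π F`, pulled back to `P`, is a nonzero vector of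
`P ∩ C(F, V)` unless `π F = π V`, which is `j`-dimensional.

Conversely, genericity makes `P ∩ C(F', V)` of smaller dimension than `P ∩ C(F, V)` for every face
`F' ⊋ F`, so adding up witnesses of `P ∩ C(F, V) ⊄ C(F', V)` gives `w ∈ P ∩ C(F, V)` vanishing on
`V` exactly along `F`; it exposes `π F`. By Farkas' lemma `w` is a conic combination of the facet
normals, positive exactly on those of `F`, so it is relatively interior in `C(F, V)`. Hence
`P ∩ C(F, V)` spans `P ∩ (span F)ᗮ`, which therefore has dimension `j - k`; this forces
`P + (span F)ᗮ = ℝⁿ`, i.e. `π` is injective on `span F`.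
-/

open scoped RealInnerProductSpace Topology

section NonnegSpan

variable {E : Type*} [AddCommGroup E] [Module ℝ E] {ι : Type*}

def nonnegSpan (u : ι → E) (t : Finset ι) : PointedCone ℝ E where
  carrier := {x | ∃ c : ι → ℝ, (∀ i ∈ t, 0 ≤ c i) ∧ ∑ i ∈ t, c i • u i = x}
  add_mem' := by
    rintro _ _ ⟨c, hc, rfl⟩ ⟨d, hd, rfl⟩
    exact ⟨c + d, fun i hi => add_nonneg (hc i hi) (hd i hi), by
      simp only [Pi.add_apply, add_smul, Finset.sum_add_distrib]⟩
  zero_mem' := ⟨0, fun _ _ => le_rfl, by simp⟩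
  smul_mem' := by
    rintro ⟨a, ha⟩ _ ⟨c, hc, rfl⟩
    exact ⟨a • c, fun i hi => mul_nonneg ha (hc i hi), by
      simp [Finset.smul_sum, mul_smul, Nonneg.mk_smul]⟩

variable {u : ι → E} {s t : Finset ι} {x : E}

lemma mem_nonnegSpan :
    x ∈ nonnegSpan u t ↔ ∃ c : ι → ℝ, (∀ i ∈ t, 0 ≤ c i) ∧ ∑ i ∈ t, c i • u i = x :=
  Iff.rfl

lemma nonnegSpan_mono (hst : s ⊆ t) : nonnegSpan u s ≤ nonnegSpan u t := by
  classical
  rintro _ ⟨c, hc, rfl⟩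
  refine ⟨fun i => if i ∈ s then c i else 0, fun i _ => ?_, ?_⟩
  · dsimp only
    split_ifs with hi
    exacts [hc i hi, le_rfl]
  · simp_rw [ite_smul, zero_smul]
    rw [Finset.sum_ite_mem, Finset.inter_eq_right.mpr hst]

/-- Carathéodory's reduction: a linear dependence among the generators lets one coefficient
of a conic combination be driven to zero. -/
lemma exists_mem_nonnegSpan_erase [DecidableEq ι] (ht : ¬ LinearIndepOn ℝ u t)
    (hx : x ∈ nonnegSpan u t) :
    ∃ i ∈ t, x ∈ nonnegSpan u (t.erase i) := by
  obtain ⟨c, hc, rfl⟩ := hx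
  obtain ⟨g, hg, i₁, hi₁, hgi₁⟩ := not_linearIndepOn_finset_iff.mp ht
  wlog hpos : 0 < g i₁ generalizing g
  · exact this (-g) (by simp [neg_smul, hg]) (by simpa using hgi₁)
      (by simpa using lt_of_le_of_ne (not_lt.mp hpos) hgi₁)
  obtain ⟨i₀, hi₀, hmin⟩ := (t.filter (0 < g ·)).exists_min_image (fun i => c i / g i)
    ⟨i₁, Finset.mem_filter.mpr ⟨hi₁, hpos⟩⟩
  obtain ⟨hi₀t, hgi₀⟩ := Finset.mem_filter.mp hi₀
  set τ := c i₀ / g i₀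
  have hτ : 0 ≤ τ := div_nonneg (hc i₀ hi₀t) hgi₀.le
  refine ⟨i₀, hi₀t, fun i => c i - τ * g i, fun i hi => ?_, ?_⟩
  · have hit := Finset.mem_of_mem_erase hi
    rcases lt_or_ge 0 (g i) with hgi | hgi
    · have := (le_div_iff₀ hgi).mp (hmin i (Finset.mem_filter.mpr ⟨hit, hgi⟩))
      linarith
    · nlinarith [hc i hit]
  · have hzero : (c i₀ - τ * g i₀) • u i₀ = 0 := by
      rw [div_mul_cancel₀ _ hgi₀.ne', sub_self, zero_smul]
    rw [Finset.sum_erase (f := fun i => (c i - τ * g i) • u i) t hzero]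
    simp only [sub_smul, mul_smul, Finset.sum_sub_distrib, ← Finset.smul_sum, hg, smul_zero,
      sub_zero]

end NonnegSpan

section Closedness

variable {E : Type*} [NormedAddCommGroup E] [NormedSpace ℝ E]
  {ι : Type*} {u : ι → E}

lemma isClosed_nonnegSpan_of_linearIndepOn {t : Finset ι} (ht : LinearIndepOn ℝ u t) :
    IsClosed (nonnegSpan u t : Set E) := by
  classical
  set L := Fintype.linearCombination ℝ (fun i : t => u i)
  have hL : nonnegSpan u t = L '' Set.Ici 0 := by
    ext x
    simp only [SetLike.mem_coe, mem_nonnegSpan, Set.mem_image, Set.mem_Ici,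
      Fintype.linearCombination_apply, L]
    constructor
    · rintro ⟨c, hc, rfl⟩
      exact ⟨fun i => c i, fun i => hc i i.2, Finset.sum_coe_sort t (fun i => c i • u i)⟩
    · rintro ⟨g, hg, rfl⟩
      refine ⟨fun i => if h : i ∈ t then g ⟨i, h⟩ else 0,
        fun i hi => by simpa [hi] using hg ⟨i, hi⟩, ?_⟩
      rw [← Finset.sum_coe_sort]
      simp
  rw [hL]
  exact (LinearMap.isClosedEmbedding_of_injective (LinearMap.ker_eq_bot.mpr
    ht.fintypeLinearCombination_injective)).isClosedMap _ isClosed_Ici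

lemma isClosed_nonnegSpan (t : Finset ι) : IsClosed (nonnegSpan u t : Set E) := by
  induction t using Finset.strongInduction with
  | H t ih =>
    classical
    by_cases ht : LinearIndepOn ℝ u t
    · exact isClosed_nonnegSpan_of_linearIndepOn ht
    · have : (nonnegSpan u t : Set E) = ⋃ i ∈ t, nonnegSpan u (t.erase i) :=
        subset_antisymm (fun x hx => by simpa using exists_mem_nonnegSpan_erase ht hx)
          (Set.iUnion₂_subset fun i _ => nonnegSpan_mono (Finset.erase_subset i t))
      rw [this]
      exact isClosed_biUnion_finset fun i hi => ih _ (Finset.erase_ssubset hi)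

end Closedness

section Farkas

variable {E : Type*} [NormedAddCommGroup E] [InnerProductSpace ℝ E] [CompleteSpace E]
  {ι : Type*} [Fintype ι]

theorem exists_nonneg_sum_eq_of_inner_nonpos (u : ι → E) {w : E}
    (hw : ∀ x, (∀ i, ⟪u i, x⟫ ≤ 0) → ⟪w, x⟫ ≤ 0) :
    ∃ c : ι → ℝ, (∀ i, 0 ≤ c i) ∧ ∑ i, c i • u i = w := by
  by_contra! hcon
  let K : ProperCone ℝ E := ⟨nonnegSpan u Finset.univ, isClosed_nonnegSpan _⟩
  have hwK : w ∉ K := fun ⟨c, hc, hcw⟩ => hcon c (fun i => hc i (Finset.mem_univ i)) hcw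
  obtain ⟨y, hyK, hwy⟩ := K.hyperplane_separation' hwK
  have huK : ∀ i, u i ∈ K := fun i => by
    classical
    exact ⟨Pi.single i 1, fun j _ => by by_cases h : j = i <;> simp [h], by simp [Pi.single_apply]⟩
  have := hw (-y) fun i => by simpa using hyK _ (huK i)
  simp only [inner_neg_right, neg_nonpos] at this
  linarith

theorem exists_sum_eq_of_inner_nonpos_of_inner_eq_zero [DecidableEq ι] (u : ι → E)
    (t : Finset ι) {z : E}
    (hz : ∀ x, (∀ i, ⟪u i, x⟫ ≤ 0) → (∀ i ∈ t, ⟪u i, x⟫ = 0) → ⟪z, x⟫ ≤ 0) :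
    ∃ c : ι → ℝ, (∀ i ∉ t, 0 ≤ c i) ∧ ∑ i, c i • u i = z := by
  let v : ι ⊕ ι → E := Sum.elim u fun i => if i ∈ t then -u i else 0
  obtain ⟨c, hc, hcz⟩ := exists_nonneg_sum_eq_of_inner_nonpos v (w := z) fun x hx => by
    refine hz x (fun i => hx (.inl i)) fun i hi => le_antisymm (hx (.inl i)) ?_
    simpa [v, hi] using hx (.inr i)
  refine ⟨fun i => c (.inl i) - if i ∈ t then c (.inr i) else 0, fun i hi => by simp [hi, hc],
    ?_⟩
  rw [← hcz, Fintype.sum_sum_type, ← Finset.sum_add_distrib]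
  refine Finset.sum_congr rfl fun i _ => ?_
  by_cases hi : i ∈ t <;> simp [v, hi, sub_eq_add_neg, add_smul]

end Farkas

lemma exists_pos_forall_nonneg_add_mul {ι : Type*} [Finite ι] {c d : ι → ℝ}
    (h : ∀ i, 0 < c i ∨ 0 ≤ c i ∧ 0 ≤ d i) : ∃ ε > 0, ∀ i, 0 ≤ c i + ε * d i := by
  have : ∀ᶠ ε in 𝓝[>] (0 : ℝ), ∀ i, 0 ≤ c i + ε * d i := by
    refine Filter.eventually_all.mpr fun i => ?_
    rcases h i with hc | ⟨hc, hd⟩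
    · have : Filter.Tendsto (fun ε => c i + ε * d i) (𝓝[>] 0) (𝓝 (c i)) :=
        ((show Continuous fun ε : ℝ => c i + ε * d i by fun_prop).tendsto' 0 (c i)
          (by simp)).mono_left nhdsWithin_le_nhds
      exact this.eventually (eventually_ge_nhds hc)
    · exact eventually_nhdsWithin_of_forall fun ε hε => add_nonneg hc (mul_nonneg hε.out.le hd)
  obtain ⟨ε, hε, hε'⟩ := (this.and self_mem_nhdsWithin).exists
  exact ⟨ε, hε', hε⟩

section InnerProductSpace

variable {E : Type*} [NormedAddCommGroup E] [InnerProductSpace ℝ E]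

lemma mem_orthogonal_span_iff {S : Set E} {v : E} :
    v ∈ (Submodule.span ℝ S)ᗮ ↔ ∀ y ∈ S, ⟪v, y⟫ = 0 := by
  refine ⟨fun h y hy => Submodule.inner_left_of_mem_orthogonal (Submodule.subset_span hy) h,
    fun h => (Submodule.mem_orthogonal' _ _).mpr fun y hy => ?_⟩
  induction hy using Submodule.span_induction with
  | mem y hy => exact h y hy
  | zero => exact inner_zero_right v
  | add y z _ _ hy hz => rw [inner_add_right, hy, hz, add_zero]
  | smul a y _ hy => rw [real_inner_smul_right, hy, mul_zero]

lemma inner_starProjection_of_mem (P : Submodule ℝ E) [P.HasOrthogonalProjection] {w : E}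
    (hw : w ∈ P) (x : E) : ⟪w, P.starProjection x⟫ = ⟪w, x⟫ := by
  rw [← Submodule.inner_starProjection_left_eq_right, Submodule.starProjection_eq_self_iff.mpr hw]

end InnerProductSpace

lemma finrank_map_eq_of_disjoint_ker {R M N : Type*} [Ring R] [AddCommGroup M] [Module R M]
    [AddCommGroup N] [Module R N] [StrongRankCondition R] {f : M →ₗ[R] N} {W : Submodule R M}
    [Module.Finite R W] (h : Disjoint W (LinearMap.ker f)) :
    Module.finrank R (W.map f) = Module.finrank R W := by
  rw [← LinearMap.range_domRestrict]
  exact LinearMap.finrank_range_of_inj (LinearMap.injective_domRestrict_iff.mpr h)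

section Polyhedral

variable {n m : ℕ} {u : Fin m → EuclideanSpace ℝ (Fin n)} {s t : Finset (Fin m)}
  {x : EuclideanSpace ℝ (Fin n)}

lemma faceOf_subset_coneOf : faceOf u s ⊆ coneOf u := fun _ hx => hx.1

lemma zero_mem_faceOf : (0 : EuclideanSpace ℝ (Fin n)) ∈ faceOf u s := ⟨by simp, by simp⟩

lemma inner_sum_nonpos_of_mem_coneOf {c : Fin m → ℝ} (hc : ∀ i ∈ t, 0 ≤ c i)
    (hx : x ∈ coneOf u) : ⟪∑ i ∈ t, c i • u i, x⟫ ≤ 0 := by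
  rw [sum_inner]
  exact Finset.sum_nonpos fun i hi => by
    rw [real_inner_smul_left]; exact mul_nonpos_of_nonneg_of_nonpos (hc i hi) (hx i)

lemma inner_sum_eq_zero_of_mem_faceOf (c : Fin m → ℝ) (hx : x ∈ faceOf u s) :
    ⟪∑ i ∈ s, c i • u i, x⟫ = 0 := by
  rw [sum_inner]
  exact Finset.sum_eq_zero fun i hi => by rw [real_inner_smul_left, hx.2 i hi, mul_zero]

lemma inner_sum_eq_zero_iff_mem_faceOf {c : Fin m → ℝ} (hc : ∀ i, 0 ≤ c i)
    (hx : x ∈ coneOf u) :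
    ⟪∑ i, c i • u i, x⟫ = 0 ↔ x ∈ faceOf u (Finset.univ.filter (0 < c ·)) := by
  simp only [sum_inner, real_inner_smul_left]
  rw [Finset.sum_eq_zero_iff_of_nonpos fun i _ => mul_nonpos_of_nonneg_of_nonpos (hc i) (hx i)]
  refine ⟨fun h => ⟨hx, fun i hi => ?_⟩, fun h i _ => ?_⟩
  · exact (mul_eq_zero.mp (h i (Finset.mem_univ i))).resolve_left
      (Finset.mem_filter.mp hi).2.ne'
  · rcases (hc i).lt_or_eq with hci | hci
    · rw [h.2 i (Finset.mem_filter.mpr ⟨Finset.mem_univ i, hci⟩), mul_zero]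
    · rw [← hci, zero_mul]

lemma faceOf_eq_setOf_inner_eq_zero {c : Fin m → ℝ} (hc : ∀ i, 0 ≤ c i)
    (hcC : ∑ i, c i • u i ∈ normalCone (coneOf u) (faceOf u s))
    (hcF : faceOf u (Finset.univ.filter (0 < c ·)) = faceOf u s) :
    faceOf u s = {x ∈ coneOf u | ⟪∑ i, c i • u i, x⟫ = 0} := by
  ext x
  exact ⟨fun hx => ⟨faceOf_subset_coneOf hx, hcC.2 x hx⟩,
    fun ⟨hxV, hx0⟩ => hcF ▸ (inner_sum_eq_zero_iff_mem_faceOf hc hxV).mp hx0⟩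

lemma mem_faceOf_of_mem_span (hx : x ∈ coneOf u) (hxs : x ∈ Submodule.span ℝ (faceOf u s)) :
    x ∈ faceOf u s :=
  ⟨hx, fun i hi => Submodule.inner_left_of_mem_orthogonal hxs
    (mem_orthogonal_span_iff.mpr fun _ hy => hy.2 i hi)⟩

lemma zero_mem_normalCone {V F : Set (EuclideanSpace ℝ (Fin n))} :
    (0 : EuclideanSpace ℝ (Fin n)) ∈ normalCone V F :=
  ⟨fun _ _ => by simp, fun _ _ => by simp⟩

lemma sum_mem_normalCone {α : Type*} {V F : Set (EuclideanSpace ℝ (Fin n))} {T : Finset α}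
    {a : α → EuclideanSpace ℝ (Fin n)}
    (ha : ∀ t ∈ T, a t ∈ normalCone V F) : ∑ t ∈ T, a t ∈ normalCone V F :=
  ⟨fun x hx => by rw [sum_inner]; exact Finset.sum_nonpos fun t ht => (ha t ht).1 x hx,
    fun x hx => by rw [sum_inner]; exact Finset.sum_eq_zero fun t ht => (ha t ht).2 x hx⟩

lemma span_normalCone_le_orthogonal (V F : Set (EuclideanSpace ℝ (Fin n))) :
    Submodule.span ℝ (normalCone V F) ≤ (Submodule.span ℝ F)ᗮ :=
  Submodule.span_le.mpr fun _ hw => mem_orthogonal_span_iff.mpr hw.2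

/-- Relative Farkas: a vector vanishing on the face `F_s` is a combination of the normals that
is conic off `s`; its part off `s` lies in `C(F_s, V)`, its part on `s` in the span of
normals `u i ∈ C(F_s, V)`. -/
lemma span_normalCone_faceOf :
    Submodule.span ℝ (normalCone (coneOf u) (faceOf u s)) = (Submodule.span ℝ (faceOf u s))ᗮ := by
  classical
  refine le_antisymm (span_normalCone_le_orthogonal _ _) fun z hz => ?_
  have hzF := mem_orthogonal_span_iff.mp hz
  obtain ⟨c, hc, rfl⟩ := exists_sum_eq_of_inner_nonpos_of_inner_eq_zero u s (z := z)
    fun x hx hxs => (hzF x ⟨hx, hxs⟩).le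
  rw [← Finset.sum_compl_add_sum s] at hzF ⊢
  refine add_mem (Submodule.subset_span ⟨fun x hx => ?_, fun y hy => ?_⟩)
    (Submodule.sum_mem _ fun i hi => Submodule.smul_mem _ _
      (Submodule.subset_span ⟨fun x hx => hx i, fun y hy => hy.2 i hi⟩))
  · exact inner_sum_nonpos_of_mem_coneOf (fun i hi => hc i (Finset.mem_compl.mp hi)) hx
  · simpa [inner_add_left, inner_sum_eq_zero_of_mem_faceOf c hy] using hzF y hy

lemma finrank_span_normalCone_faceOf_add :
    Module.finrank ℝ (Submodule.span ℝ (normalCone (coneOf u) (faceOf u s))) +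
      Module.finrank ℝ (Submodule.span ℝ (faceOf u s)) = n := by
  rw [span_normalCone_faceOf, add_comm, Submodule.finrank_add_finrank_orthogonal,
    finrank_euclideanSpace_fin]

lemma finrank_span_normalCone_faceOf_lt (h : faceOf u s ⊂ faceOf u t) :
    Module.finrank ℝ (Submodule.span ℝ (normalCone (coneOf u) (faceOf u t))) <
      Module.finrank ℝ (Submodule.span ℝ (normalCone (coneOf u) (faceOf u s))) := by
  obtain ⟨x, hxt, hxs⟩ := Set.exists_of_ssubset h
  have hlt : Submodule.span ℝ (faceOf u s) < Submodule.span ℝ (faceOf u t) :=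
    lt_of_le_of_ne (Submodule.span_mono h.subset) fun heq =>
      hxs (mem_faceOf_of_mem_span (faceOf_subset_coneOf hxt) (heq ▸ Submodule.subset_span hxt))
  have := Submodule.finrank_lt_finrank_of_lt hlt
  have := finrank_span_normalCone_faceOf_add (u := u) (s := s)
  have := finrank_span_normalCone_faceOf_add (u := u) (s := t)
  omega

end Polyhedral

section GenericPosition

variable {n m : ℕ} {u : Fin m → EuclideanSpace ℝ (Fin n)} {s : Finset (Fin m)}
  (P : Submodule ℝ (EuclideanSpace ℝ (Fin n)))

/-- Adding up, over all faces `F_t ⊋ F_s`, a witness of `P ∩ C(F_s, V) ⊄ C(F_t, V)` gives a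
vector of `P ∩ C(F_s, V)` whose zero set on `V` is exactly `F_s`; Farkas writes it as a conic
combination of the normals, positive precisely on the normals of `F_s`. -/
lemma exists_nonneg_sum_mem_inter_normalCone
    (h : ∀ t, faceOf u s ⊂ faceOf u t →
      ¬ (P : Set _) ∩ normalCone (coneOf u) (faceOf u s) ⊆
        normalCone (coneOf u) (faceOf u t)) :
    ∃ c : Fin m → ℝ, (∀ i, 0 ≤ c i) ∧
      ∑ i, c i • u i ∈ (P : Set _) ∩
        normalCone (coneOf u) (faceOf u s) ∧
      faceOf u (Finset.univ.filter (0 < c ·)) = faceOf u s := by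
  classical
  choose! a haA haC using fun t (ht : faceOf u s ⊂ faceOf u t) => Set.not_subset.mp (h t ht)
  set T := Finset.univ.filter fun t => faceOf u s ⊂ faceOf u t
  have hwA : ∑ t ∈ T, a t ∈ (P : Set _) ∩
      normalCone (coneOf u) (faceOf u s) :=
    ⟨P.sum_mem fun t ht => (haA t (Finset.mem_filter.mp ht).2).1,
      sum_mem_normalCone fun t ht => (haA t (Finset.mem_filter.mp ht).2).2⟩
  obtain ⟨c, hc, hcw⟩ := exists_nonneg_sum_eq_of_inner_nonpos u fun x hx => hwA.2.1 x hx
  refine ⟨c, hc, hcw ▸ hwA, ?_⟩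
  have hzero : ∀ x ∈ coneOf u, ⟪∑ t ∈ T, a t, x⟫ = 0 ↔
      x ∈ faceOf u (Finset.univ.filter (0 < c ·)) := fun x hx =>
    hcw ▸ inner_sum_eq_zero_iff_mem_faceOf hc hx
  have hsub : faceOf u s ⊆ faceOf u (Finset.univ.filter (0 < c ·)) := fun x hx =>
    (hzero x (faceOf_subset_coneOf hx)).mp (hwA.2.2 x hx)
  refine (hsub.eq_or_ssubset.resolve_right fun hss =>
    haC _ hss ⟨(haA _ hss).2.1, fun y hy => ?_⟩).symm
  have hy0 := (hzero y (faceOf_subset_coneOf hy)).mpr hy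
  rw [sum_inner] at hy0
  exact (Finset.sum_eq_zero_iff_of_nonpos fun t ht =>
    (haA t (Finset.mem_filter.mp ht).2).2.1 y (faceOf_subset_coneOf hy)).mp hy0 _
    (Finset.mem_filter.mpr ⟨Finset.mem_univ _, hss⟩)

/-- A conic combination whose positive normals cut out exactly `F_s` lies in the relative
interior of `C(F_s, V)`, so `P ∩ C(F_s, V)` spans all of `P ∩ (span F_s)ᗮ`. -/
lemma inf_orthogonal_le_span_inter_normalCone {c : Fin m → ℝ} (hc : ∀ i, 0 ≤ c i)
    (hcA : ∑ i, c i • u i ∈ (P : Set _) ∩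
      normalCone (coneOf u) (faceOf u s))
    (hcF : faceOf u (Finset.univ.filter (0 < c ·)) = faceOf u s) :
    P ⊓ (Submodule.span ℝ (faceOf u s))ᗮ ≤
      Submodule.span ℝ ((P : Set _) ∩
        normalCone (coneOf u) (faceOf u s)) := by
  classical
  rintro z ⟨hzP, hz⟩
  have hzF := mem_orthogonal_span_iff.mp hz
  obtain ⟨d, hd, rfl⟩ := exists_sum_eq_of_inner_nonpos_of_inner_eq_zero u
    (Finset.univ.filter (0 < c ·)) fun x hx hxt => (hzF x (hcF ▸ ⟨hx, hxt⟩)).le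
  obtain ⟨ε, hε, hcd⟩ := exists_pos_forall_nonneg_add_mul (c := c) (d := d) fun i =>
    (hc i).lt_or_eq.imp id fun hci => ⟨hc i, hd i (by simp [← hci])⟩
  set w := ∑ i, c i • u i
  set z := ∑ i, d i • u i
  have hwz : w + ε • z ∈ (P : Set _) ∩
      normalCone (coneOf u) (faceOf u s) := by
    refine ⟨P.add_mem hcA.1 (P.smul_mem ε hzP), fun x hx => ?_, fun y hy => ?_⟩
    · have : w + ε • z = ∑ i, (c i + ε * d i) • u i := by
        simp only [w, z, Finset.smul_sum, add_smul, mul_smul, Finset.sum_add_distrib]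
      rw [this]
      exact inner_sum_nonpos_of_mem_coneOf (fun i _ => hcd i) hx
    · rw [inner_add_left, real_inner_smul_left, hcA.2.2 y hy, hzF y hy, mul_zero, add_zero]
  have : ε • z ∈ Submodule.span ℝ ((P : Set _) ∩
      normalCone (coneOf u) (faceOf u s)) := by
    simpa using sub_mem (Submodule.subset_span hwz) (Submodule.subset_span hcA)
  simpa [hε.ne'] using Submodule.smul_mem _ ε⁻¹ this

lemma sup_orthogonal_span_faceOf_eq_top {c : Fin m → ℝ} (hc : ∀ i, 0 ≤ c i)
    (hcA : ∑ i, c i • u i ∈ (P : Set _) ∩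
      normalCone (coneOf u) (faceOf u s))
    (hcF : faceOf u (Finset.univ.filter (0 < c ·)) = faceOf u s)
    (hdim : Module.finrank ℝ (Submodule.span ℝ ((P : Set _) ∩
        normalCone (coneOf u) (faceOf u s))) + Module.finrank ℝ (Submodule.span ℝ (faceOf u s)) =
      Module.finrank ℝ P) :
    P ⊔ (Submodule.span ℝ (faceOf u s))ᗮ = ⊤ := by
  have hspan : Submodule.span ℝ ((P : Set _) ∩
      normalCone (coneOf u) (faceOf u s)) = P ⊓ (Submodule.span ℝ (faceOf u s))ᗮ :=
    le_antisymm (le_inf (Submodule.span_le.mpr Set.inter_subset_left)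
        ((Submodule.span_mono Set.inter_subset_right).trans (span_normalCone_le_orthogonal _ _)))
      (inf_orthogonal_le_span_inter_normalCone P hc hcA hcF)
  apply Submodule.eq_top_of_finrank_eq
  have := Submodule.finrank_sup_add_finrank_inf_eq P (Submodule.span ℝ (faceOf u s))ᗮ
  have := (Submodule.span ℝ (faceOf u s)).finrank_add_finrank_orthogonal
  rw [← hspan] at *
  omega

end GenericPosition

section Projection

variable {n : ℕ} (P : Submodule ℝ (EuclideanSpace ℝ (Fin n)))
  {V F : Set (EuclideanSpace ℝ (Fin n))}

lemma inter_normalCone_image_starProjection :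
    (P : Set _) ∩ normalCone (P.starProjection '' V) (P.starProjection '' F) =
      (P : Set _) ∩ normalCone V F := by
  ext w
  refine and_congr_right fun hw => ?_
  simp only [normalCone, Set.mem_ofPred_eq, Set.forall_mem_image, inner_starProjection_of_mem P hw]

lemma isExposed_image_starProjection {w : EuclideanSpace ℝ (Fin n)} (hw : w ∈ P) (hV0 : 0 ∈ V)
    (hwV : ∀ x ∈ V, ⟪w, x⟫ ≤ 0) (hF : F = {x ∈ V | ⟪w, x⟫ = 0}) :
    IsExposed ℝ (P.starProjection '' V) (P.starProjection '' F) := by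
  refine fun _ => ⟨innerSL ℝ w, ?_⟩
  subst hF
  ext y
  simp only [Set.mem_image, Set.mem_ofPred_eq, innerSL_apply_apply]
  constructor
  · rintro ⟨x, ⟨hxV, hx0⟩, rfl⟩
    refine ⟨⟨x, hxV, rfl⟩, ?_⟩
    rintro _ ⟨x', hx', rfl⟩
    rw [inner_starProjection_of_mem P hw, inner_starProjection_of_mem P hw, hx0]
    exact hwV x' hx'
  · rintro ⟨⟨x, hxV, rfl⟩, hmax⟩
    have := hmax _ ⟨0, hV0, rfl⟩
    rw [map_zero, inner_zero_right, inner_starProjection_of_mem P hw] at this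
    exact ⟨x, ⟨hxV, le_antisymm (hwV x hxV) this⟩, rfl⟩

lemma inter_normalCone_ne_of_isExposed (hF0 : 0 ∈ F) (hV : Submodule.span ℝ V = ⊤)
    (hexp : IsExposed ℝ (P.starProjection '' V) (P.starProjection '' F))
    (hdim : sdim (P.starProjection '' F) ≠ Module.finrank ℝ P) :
    (P : Set _) ∩ normalCone V F ≠ {0} := by
  obtain ⟨l, hl⟩ := hexp ⟨0, 0, hF0, map_zero _⟩
  set w := P.starProjection ((InnerProductSpace.toDual ℝ _).symm l)
  have hwx : ∀ x, ⟪w, x⟫ = l (P.starProjection x) := fun x => by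
    rw [Submodule.inner_starProjection_left_eq_right, InnerProductSpace.toDual_symm_apply]
  have h0 : (0 : EuclideanSpace ℝ (Fin n)) ∈ P.starProjection '' F := ⟨0, hF0, map_zero _⟩
  rw [hl] at h0
  have hwV : ∀ x ∈ V, ⟪w, x⟫ ≤ 0 := fun x hx => by
    simpa [hwx] using h0.2 _ ⟨x, hx, rfl⟩
  have hwF : ∀ x ∈ F, ⟪w, x⟫ = 0 := fun x hx => by
    have hx : P.starProjection x ∈ P.starProjection '' F := ⟨x, hx, rfl⟩
    rw [hl] at hx
    rw [hwx]
    exact le_antisymm (by simpa using h0.2 _ hx.1) (by simpa using hx.2 0 h0.1)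
  intro heq
  have hw0 : w ∈ ({0} : Set (EuclideanSpace ℝ (Fin n))) :=
    heq ▸ ⟨P.starProjection_apply_mem _, hwV, hwF⟩
  refine hdim ?_
  have himage : P.starProjection '' F = P.starProjection '' V := by
    rw [hl]
    refine Set.Subset.antisymm (fun y hy => hy.1) fun y hy => ⟨hy, ?_⟩
    rintro _ ⟨x', -, rfl⟩
    obtain ⟨x, -, rfl⟩ := hy
    simp [← hwx, Set.mem_singleton_iff.mp hw0]
  rw [sdim, himage, ← ContinuousLinearMap.coe_coe, Submodule.span_image, hV, Submodule.map_top]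
  exact congrArg (fun S : Submodule ℝ (EuclideanSpace ℝ (Fin n)) => Module.finrank ℝ S)
    P.range_starProjection

lemma sdim_image_starProjection (h : P ⊔ (Submodule.span ℝ F)ᗮ = ⊤) :
    sdim (P.starProjection '' F) = sdim F := by
  have hdisj : Disjoint (Submodule.span ℝ F)
      (P.starProjection : EuclideanSpace ℝ (Fin n) →ₗ[ℝ] EuclideanSpace ℝ (Fin n)).ker := by
    have := Submodule.inf_orthogonal P (Submodule.span ℝ F)ᗮ
    rw [h, Submodule.top_orthogonal_eq_bot, Submodule.orthogonal_orthogonal] at this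
    rw [disjoint_iff, Submodule.ker_starProjection, inf_comm, this]
  rw [sdim, sdim, ← ContinuousLinearMap.coe_coe, Submodule.span_image,
    finrank_map_eq_of_disjoint_ker hdisj]

end Projection

/-- let `V ⊆ ℝ^n` be a full-dimensional polyhedral cone with vertex `0`
and `P` a `j`-dimensional subspace transverse to all normal cones of `V` (generic
position). For a `k`-face `F` of `V` with `k < j`, the image `π_P(F)` is a `k`-face
of `π_P(V)` iff `P ∩ C(F,V) ≠ {0}`, and in that case the normal cone of `π_P(V)`
along `π_P(F)` computed inside `P` equals `P ∩ C(F,V)`. -/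
theorem stmt10 {n m : ℕ} (u : Fin m → EuclideanSpace ℝ (Fin n))
    (V : Set (EuclideanSpace ℝ (Fin n))) (hV : V = coneOf u)
    (hfull : Submodule.span ℝ V = ⊤)
    (j : ℕ) (P : Submodule ℝ (EuclideanSpace ℝ (Fin n)))
    (hPdim : Module.finrank ℝ P = j)
    (π : EuclideanSpace ℝ (Fin n) → EuclideanSpace ℝ (Fin n))
    (hπ : ∀ x, π x = (P.orthogonalProjectionOnto x : EuclideanSpace ℝ (Fin n)))
    (hgen : ∀ s : Finset (Fin m),
      ((P : Set (EuclideanSpace ℝ (Fin n))) ∩ normalCone V (faceOf u s))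
          = {(0 : EuclideanSpace ℝ (Fin n))} ∨
        Module.finrank ℝ (Submodule.span ℝ
            ((P : Set (EuclideanSpace ℝ (Fin n))) ∩ normalCone V (faceOf u s)))
          = j + Module.finrank ℝ (Submodule.span ℝ (normalCone V (faceOf u s))) - n)
    (s : Finset (Fin m)) (F : Set (EuclideanSpace ℝ (Fin n))) (hF : F = faceOf u s)
    (k : ℕ) (hk : sdim F = k) (hkj : k < j) :
    ((IsExposed ℝ (π '' V) (π '' F) ∧ sdim (π '' F) = k) ↔
        (P : Set (EuclideanSpace ℝ (Fin n))) ∩ normalCone V F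
          ≠ {(0 : EuclideanSpace ℝ (Fin n))})
    ∧ ((P : Set (EuclideanSpace ℝ (Fin n))) ∩ normalCone V F
          ≠ {(0 : EuclideanSpace ℝ (Fin n))} →
        (P : Set (EuclideanSpace ℝ (Fin n))) ∩ normalCone (π '' V) (π '' F)
          = (P : Set (EuclideanSpace ℝ (Fin n))) ∩ normalCone V F) := by
  subst hV hF
  obtain rfl : π = P.starProjection := funext hπ
  refine ⟨⟨fun ⟨hexp, hdim⟩ => inter_normalCone_ne_of_isExposed P zero_mem_faceOf hfull hexp
    (by omega), fun hPC => ?_⟩, fun _ => inter_normalCone_image_starProjection P⟩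
  unfold sdim at hk
  have hCs := finrank_span_normalCone_faceOf_add (u := u) (s := s)
  have hA := (hgen s).resolve_left hPC
  -- by genericity, `P ∩ C(F_t, V)` is too small to contain `P ∩ C(F_s, V)` when `F_s ⊂ F_t`
  obtain ⟨c, hc, hcA, hcF⟩ := exists_nonneg_sum_mem_inter_normalCone P fun t hst hsub => by
    have hlt := finrank_span_normalCone_faceOf_lt hst
    have hAt : (P : Set _) ∩ normalCone (coneOf u) (faceOf u s) ⊆
        (P : Set _) ∩ normalCone (coneOf u) (faceOf u t) :=
      Set.subset_inter Set.inter_subset_left hsub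
    rcases hgen t with ht | ht
    · exact hPC (Set.Subset.antisymm (ht ▸ hAt)
        (Set.singleton_subset_iff.mpr ⟨P.zero_mem, zero_mem_normalCone⟩))
    · have := Submodule.finrank_mono (Submodule.span_mono (R := ℝ) hAt)
      omega
  have hsup := sup_orthogonal_span_faceOf_eq_top P hc hcA hcF (by omega)
  exact ⟨isExposed_image_starProjection P hcA.1 (faceOf_subset_coneOf (zero_mem_faceOf (s := s)))
      hcA.2.1 (faceOf_eq_setOf_inner_eq_zero hc hcA.2 hcF),
    (sdim_image_starProjection P hsup).trans hk⟩
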